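/- Nonlinear WLLN under pairwise uncorrelatedness (Remark 3, first bullet): under the standing assumptions, and assuming that for each n the truncated variables are pairwise uncorrelated in the sublinear sense, i.e. 𝔼[(Y_{n,k} − μ⁺_{n,k})(Y_{n,i} − μ⁺_{n,i})] = 0 for all 1 ≤ i, k ≤ n with i ≠ k, it holds that for every ε > 0, V(S_n/n ≥ μ̄_n + ε) → 0 as n → ∞. -/

import Mathlib

open MeasureTheory Filter

noncomputable def upperExp {Ω : Type*} [MeasurableSpace Ω] (Ps : Set (Measure Ω)) (Z : Ω → ℝ) : ℝ :=
  ⨆ P : Ps, ∫ ω, Z ω ∂(P : Measure Ω)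

noncomputable def lowerExp {Ω : Type*} [MeasurableSpace Ω] (Ps : Set (Measure Ω)) (Z : Ω → ℝ) : ℝ :=
  ⨅ P : Ps, ∫ ω, Z ω ∂(P : Measure Ω)

noncomputable def upperCap {Ω : Type*} [MeasurableSpace Ω] (Ps : Set (Measure Ω)) (A : Set Ω) : ℝ :=
  ⨆ P : Ps, ((P : Measure Ω) A).toReal

noncomputable def lowerCap {Ω : Type*} [MeasurableSpace Ω] (Ps : Set (Measure Ω)) (A : Set Ω) : ℝ :=
  ⨅ P : Ps, ((P : Measure Ω) A).toReal

/-!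
Fix `n` and a measure `P ∈ Ps`. Off the event that some `|X_k| > n`, the sum `S_n` equals
`∑ Y_{n,k}`, and since `E_P Y_{n,k} ≤ μ⁺_{n,k}`, the event `S_n / n ≥ μ̄_n + ε` forces the
centred sum `∑ (Y_{n,k} - E_P Y_{n,k})` to exceed `nε`; Chebyshev bounds this by
`Var_P (∑ Y_{n,k}) / (nε)²`. Sublinear uncorrelatedness makes every covariance
`Cov_P (Y_{n,k}, Y_{n,i})`, `i ≠ k`, nonpositive, since recentring at the larger `μ⁺` only
increases the product moment. So the variance is at most `∑ E_P Y_{n,k}²`, which the layer-cake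
formula bounds by `2n² ∫₀¹ ψ_n + (n+1)² ψ_n(1)`. Altogether
`V(S_n / n ≥ μ̄_n + ε) ≤ ψ_n(1) + (2 ∫₀¹ ψ_n + (1 + 1/n)² ψ_n(1)) / ε²`, and the right-hand side
tends to `0` by the pointwise hypothesis on `ψ_n` and Vitali's convergence theorem.
-/

open Set ProbabilityTheory
open scoped Topology

section UpperCapacity

variable {Ω : Type*} [MeasurableSpace Ω] {Ps : Set (Measure Ω)}

lemma upperCap_nonneg (A : Set Ω) : 0 ≤ upperCap Ps A :=
  Real.iSup_nonneg fun _ => ENNReal.toReal_nonneg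

lemma upperCap_le {A : Set Ω} {b : ℝ} (h : ∀ P ∈ Ps, P.real A ≤ b) (hb : 0 ≤ b) :
    upperCap Ps A ≤ b :=
  Real.iSup_le (fun P => h P P.2) hb

lemma measureReal_le_upperCap (hprob : ∀ P ∈ Ps, IsProbabilityMeasure P) {P : Measure Ω}
    (hP : P ∈ Ps) (A : Set Ω) : P.real A ≤ upperCap Ps A := by
  refine le_ciSup (f := fun Q : Ps => (Q : Measure Ω).real A) ⟨1, ?_⟩ ⟨P, hP⟩
  rintro _ ⟨Q, rfl⟩
  have := hprob Q Q.2
  exact measureReal_le_one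

lemma upperCap_mono (hprob : ∀ P ∈ Ps, IsProbabilityMeasure P) {A B : Set Ω} (hAB : A ⊆ B) :
    upperCap Ps A ≤ upperCap Ps B :=
  upperCap_le (fun P hP => by
      have := hprob P hP
      exact (measureReal_mono hAB).trans (measureReal_le_upperCap hprob hP B))
    (upperCap_nonneg B)

lemma antitone_upperCap_lt (hprob : ∀ P ∈ Ps, IsProbabilityMeasure P) (f : Ω → ℝ) :
    Antitone fun s => upperCap Ps {ω | s < f ω} :=
  fun _ _ hst => upperCap_mono hprob fun _ h => lt_of_le_of_lt hst h

lemma integral_le_upperExp (hprob : ∀ P ∈ Ps, IsProbabilityMeasure P) {Z : Ω → ℝ} {C : ℝ}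
    (hZ : ∀ ω, |Z ω| ≤ C) {P : Measure Ω} (hP : P ∈ Ps) : ∫ ω, Z ω ∂P ≤ upperExp Ps Z := by
  refine le_ciSup (f := fun Q : Ps => ∫ ω, Z ω ∂(Q : Measure Ω)) ⟨C, ?_⟩ ⟨P, hP⟩
  rintro _ ⟨Q, rfl⟩
  have := hprob Q Q.2
  have h := norm_integral_le_of_norm_le_const (μ := (Q : Measure Ω)) (f := Z) (ae_of_all _ hZ)
  rw [probReal_univ, mul_one, Real.norm_eq_abs] at h
  exact (le_abs_self _).trans h

lemma sum_integral_mul_upperCap_eq (hprob : ∀ P ∈ Ps, IsProbabilityMeasure P) {ι : Type*}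
    {s : Finset ι} {X : ι → Ω → ℝ} {ψ : ℝ → ℝ} {c : ℝ} (hc : c ≠ 0)
    (hψ : ∀ y, ψ y = ∑ k ∈ s, y * upperCap Ps {ω | c * y < |X k ω|}) :
    ∑ k ∈ s, ∫ r in 0..c, r * upperCap Ps {ω | r < |X k ω|} = c ^ 2 * ∫ y in 0..1, ψ y := by
  have hpsi : ∀ r, ∑ k ∈ s, r * upperCap Ps {ω | r < |X k ω|} = c * ψ (r / c) := fun r => by
    rw [hψ, Finset.mul_sum, mul_div_cancel₀ _ hc]
    exact Finset.sum_congr rfl fun k _ => by field_simp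
  rw [← intervalIntegral.integral_finsetSum (f := fun k r => r * upperCap Ps {ω | r < |X k ω|})
    fun k _ =>
      (antitone_upperCap_lt hprob _).intervalIntegrable.continuousOn_mul continuousOn_id]
  simp only [hpsi, intervalIntegral.integral_const_mul, intervalIntegral.integral_comp_div ψ hc,
    zero_div, div_self hc, smul_eq_mul]
  ring

end UpperCapacity

section Truncation

def truncMul (φ : ℝ → ℝ) (x : ℝ) : ℝ := x * φ |x|

variable {φ : ℝ → ℝ} {c x : ℝ}

lemma truncMul_of_abs_le (hone : ∀ x, |x| ≤ c → φ x = 1) (hx : |x| ≤ c) : truncMul φ x = x := by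
  rw [truncMul, hone _ ((abs_abs x).trans_le hx), mul_one]

lemma abs_truncMul_le (hzero : ∀ x, c + 1 ≤ |x| → φ x = 0) (hrange : ∀ x, φ x ∈ Icc 0 1)
    (hc : 0 ≤ c + 1) : |truncMul φ x| ≤ c + 1 := by
  rcases le_or_gt (c + 1) |x| with hx | hx
  · rw [truncMul, hzero _ ((abs_abs x).symm ▸ hx), mul_zero, abs_zero]
    exact hc
  · rw [truncMul, abs_mul, abs_of_nonneg (hrange _).1]
    linarith [mul_le_of_le_one_right (abs_nonneg x) (hrange |x|).2]

lemma truncMul_sq_le (hone : ∀ x, |x| ≤ c → φ x = 1) (hzero : ∀ x, c + 1 ≤ |x| → φ x = 0)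
    (hrange : ∀ x, φ x ∈ Icc 0 1) (hc : 0 ≤ c + 1) :
    truncMul φ x ^ 2 ≤ min |x| c ^ 2 + (c + 1) ^ 2 * (Ioi c).indicator 1 |x| := by
  rcases le_or_gt |x| c with hx | hx
  · rw [truncMul_of_abs_le hone hx, min_eq_left hx,
      indicator_of_notMem (show |x| ∉ Ioi c from not_lt.2 hx), sq_abs, mul_zero, add_zero]
  · rw [indicator_of_mem (mem_Ioi.2 hx), Pi.one_apply, mul_one, ← sq_abs (truncMul φ x)]
    nlinarith [abs_truncMul_le (x := x) hzero hrange hc, abs_nonneg (truncMul φ x),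
      sq_nonneg (min |x| c)]

lemma measurable_truncMul (hφ : Measurable φ) : Measurable (truncMul φ) :=
  measurable_id.mul (hφ.comp measurable_id.abs)

end Truncation

section SingleMeasure

variable {Ω : Type*} [MeasurableSpace Ω] {P : Measure Ω}

lemma antitone_measureReal_lt [IsFiniteMeasure P] (f : Ω → ℝ) :
    Antitone fun s => P.real {ω | s < f ω} :=
  fun _ _ hst => measureReal_mono fun _ h => lt_of_le_of_lt hst h

lemma integral_min_abs_sq [IsFiniteMeasure P] {X : Ω → ℝ} (hX : Measurable X) {c : ℝ}
    (hc : 0 ≤ c) : ∫ ω, min |X ω| c ^ 2 ∂P = 2 * ∫ s in 0..c, s * P.real {ω | s < |X ω|} := by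
  -- Layer cake for `min |X| c` with density `2t`; the level sets `{t < min |X| c}` are empty
  -- for `t ≥ c` and equal `{t < |X|}` below `c`.
  have hlayer := lintegral_comp_eq_lintegral_meas_lt_mul P (f := fun ω => min |X ω| c)
    (g := fun t => 2 * t) (ae_of_all _ fun ω => le_min (abs_nonneg _) hc)
    (hX.abs.min measurable_const).aemeasurable
    (fun t _ => (continuous_const.mul continuous_id).intervalIntegrable _ _)
    ((ae_restrict_iff' measurableSet_Ioi).2 (ae_of_all _ fun t (ht : 0 < t) => by positivity))
  have hsq : ∀ x : ℝ, ∫ t in (0 : ℝ)..x, 2 * t = x ^ 2 := fun x => by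
    rw [intervalIntegral.integral_const_mul, integral_id]; ring
  simp only [hsq] at hlayer
  have hsupp : (fun t => P {ω | t < min |X ω| c} * ENNReal.ofReal (2 * t)).support ⊆ Iio c := by
    intro t ht
    by_contra htc
    refine ht ?_
    have : {ω | t < min |X ω| c} = ∅ :=
      eq_empty_of_forall_notMem fun ω hω => htc (mem_Iio.2 (hω.trans_le (min_le_right _ _)))
    simp only [this, measure_empty, zero_mul]
  rw [← setLIntegral_eq_of_support_subset hsupp, Measure.restrict_restrict measurableSet_Iio,
    Iio_inter_Ioi] at hlayer
  have hIoo : ∀ t ∈ Ioo 0 c, P {ω | t < min |X ω| c} * ENNReal.ofReal (2 * t)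
      = ENNReal.ofReal (2 * (t * P.real {ω | t < |X ω|})) := by
    intro t ht
    have : {ω | t < min |X ω| c} = {ω | t < |X ω|} := by
      ext ω; simp [ht.2]
    rw [this, ← ofReal_measureReal, ← ENNReal.ofReal_mul measureReal_nonneg]
    ring_nf
  rw [setLIntegral_congr_fun measurableSet_Ioo hIoo] at hlayer
  have hint : IntervalIntegrable (fun s => s * P.real {ω | s < |X ω|}) volume 0 c :=
    (antitone_measureReal_lt _).intervalIntegrable.continuousOn_mul continuousOn_id
  rw [integral_eq_lintegral_of_nonneg_ae (ae_of_all _ fun ω => sq_nonneg _)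
      ((hX.abs.min measurable_const).pow_const 2).aestronglyMeasurable, hlayer,
    ← integral_eq_lintegral_of_nonneg_ae, intervalIntegral.integral_of_le hc,
    integral_Ioc_eq_integral_Ioo, ← integral_const_mul]
  · exact (ae_restrict_iff' measurableSet_Ioo).2 (ae_of_all _ fun t ht => by
      have := ht.1; positivity)
  · exact ((hint.1.mono_set Ioo_subset_Ioc_self).const_mul 2).aestronglyMeasurable

lemma integral_truncMul_sq_le [IsFiniteMeasure P] {X : Ω → ℝ} (hX : Measurable X)
    {φ : ℝ → ℝ} {c : ℝ} (hone : ∀ x, |x| ≤ c → φ x = 1)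
    (hzero : ∀ x, c + 1 ≤ |x| → φ x = 0) (hrange : ∀ x, φ x ∈ Icc 0 1) (hc : 0 ≤ c) :
    ∫ ω, truncMul φ (X ω) ^ 2 ∂P
      ≤ 2 * (∫ s in 0..c, s * P.real {ω | s < |X ω|}) + (c + 1) ^ 2 * P.real {ω | c < |X ω|} := by
  have hmeas : MeasurableSet {ω | c < |X ω|} := measurableSet_lt measurable_const hX.abs
  have hmin : Integrable (fun ω => min |X ω| c ^ 2) P :=
    .of_bound ((hX.abs.min measurable_const).pow_const 2).aestronglyMeasurable (c ^ 2)
      (ae_of_all _ fun ω => by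
        rw [Real.norm_eq_abs, abs_sq]
        exact pow_le_pow_left₀ (le_min (abs_nonneg _) hc) (min_le_right _ _) 2)
  have hind : Integrable ({ω | c < |X ω|}.indicator (1 : Ω → ℝ)) P :=
    (integrable_const 1).indicator hmeas
  calc ∫ ω, truncMul φ (X ω) ^ 2 ∂P
      ≤ ∫ ω, (min |X ω| c ^ 2 + (c + 1) ^ 2 * {ω | c < |X ω|}.indicator 1 ω) ∂P := by
        refine integral_mono_of_nonneg (ae_of_all _ fun ω => sq_nonneg _)
          (hmin.add (hind.const_mul _)) (ae_of_all _ fun ω => ?_)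
        exact truncMul_sq_le hone hzero hrange (by linarith)
    _ = _ := by
        rw [integral_add hmin (hind.const_mul _), integral_const_mul, integral_indicator_one hmeas,
          integral_min_abs_sq hX hc]

lemma covariance_le_integral_mul_sub [IsProbabilityMeasure P] {U V : Ω → ℝ} (hU : MemLp U 2 P)
    (hV : MemLp V 2 P) {a b : ℝ} (ha : P[U] ≤ a) (hb : P[V] ≤ b) :
    cov[U, V; P] ≤ ∫ ω, (U ω - a) * (V ω - b) ∂P := by
  have hU' : MemLp (fun ω => U ω - a) 2 P := hU.sub (memLp_const a)
  have hV' : MemLp (fun ω => V ω - b) 2 P := hV.sub (memLp_const b)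
  have hmean : ∀ {W : Ω → ℝ} (d : ℝ), Integrable W P → P[fun ω => W ω - d] = P[W] - d :=
    fun d hW => by simp [integral_sub hW (integrable_const d)]
  -- `cov[U, V] = P[(U - a) * (V - b)] - (P[U] - a) * (P[V] - b)`, and the last product is `≥ 0`.
  rw [← covariance_sub_const_left (hU.integrable one_le_two) a,
    ← covariance_sub_const_right (hV.integrable one_le_two) b, covariance_eq_sub hU' hV',
    hmean a (hU.integrable one_le_two), hmean b (hV.integrable one_le_two)]
  simp only [Pi.mul_apply]
  nlinarith [mul_nonneg (sub_nonneg.2 ha) (sub_nonneg.2 hb)]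

lemma variance_sum_le_sum_integral_sq [IsProbabilityMeasure P] {ι : Type*} {s : Finset ι}
    {Y : ι → Ω → ℝ} (hY : ∀ i ∈ s, MemLp (Y i) 2 P)
    (hcov : ∀ i ∈ s, ∀ j ∈ s, i ≠ j → cov[Y i, Y j; P] ≤ 0) :
    Var[∑ i ∈ s, Y i; P] ≤ ∑ i ∈ s, P[Y i ^ 2] := by
  classical
  rw [variance_sum' hY]
  refine Finset.sum_le_sum fun i hi => ?_
  rw [← Finset.add_sum_erase s _ hi, covariance_self (hY i hi).aemeasurable]
  have hoff : ∑ j ∈ s.erase i, cov[Y i, Y j; P] ≤ 0 := Finset.sum_nonpos fun j hj =>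
    hcov i hi j (Finset.mem_of_mem_erase hj) (Finset.ne_of_mem_erase hj).symm
  linarith [variance_le_expectation_sq (hY i hi).aestronglyMeasurable]

lemma measureReal_sum_ge_le_tail_add_variance [IsFiniteMeasure P] {ι : Type*} {s : Finset ι}
    {X Y : ι → Ω → ℝ} {m : ι → ℝ} {c t : ℝ} (hY : ∀ i ∈ s, MemLp (Y i) 2 P)
    (hm : ∀ i ∈ s, P[Y i] ≤ m i)
    (hYX : ∀ i ∈ s, ∀ ω, |X i ω| ≤ c → Y i ω = X i ω) (ht : 0 < t) :
    P.real {ω | ∑ i ∈ s, m i + t ≤ ∑ i ∈ s, X i ω}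
      ≤ ∑ i ∈ s, P.real {ω | c < |X i ω|} + Var[∑ i ∈ s, Y i; P] / t ^ 2 := by
  have hYsum : MemLp (∑ i ∈ s, Y i) 2 P := memLp_finsetSum' s hY
  have hmean : P[∑ i ∈ s, Y i] ≤ ∑ i ∈ s, m i := by
    simp only [Finset.sum_apply]
    rw [integral_finsetSum s fun i hi => (hY i hi).integrable one_le_two]
    exact Finset.sum_le_sum hm
  have hsub : {ω | ∑ i ∈ s, m i + t ≤ ∑ i ∈ s, X i ω}
      ⊆ (⋃ i ∈ s, {ω | c < |X i ω|}) ∪ {ω | t ≤ |(∑ i ∈ s, Y i) ω - P[∑ i ∈ s, Y i]|} := by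
    intro ω hω
    by_cases htail : ∃ i ∈ s, c < |X i ω|
    · obtain ⟨i, hi, hlt⟩ := htail
      exact Or.inl (mem_biUnion hi hlt)
    · simp only [not_exists, not_and, not_lt] at htail
      have hXY : ∑ i ∈ s, X i ω = (∑ i ∈ s, Y i) ω := by
        rw [Finset.sum_apply]
        exact Finset.sum_congr rfl fun i hi => (hYX i hi ω (htail i hi)).symm
      refine Or.inr (show t ≤ _ from le_trans ?_ (le_abs_self _))
      have : ∑ i ∈ s, m i + t ≤ ∑ i ∈ s, X i ω := hω
      linarith
  have hcheb : P.real {ω | t ≤ |(∑ i ∈ s, Y i) ω - P[∑ i ∈ s, Y i]|}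
      ≤ Var[∑ i ∈ s, Y i; P] / t ^ 2 :=
    ENNReal.toReal_le_of_le_ofReal (by positivity [variance_nonneg (∑ i ∈ s, Y i) P])
      (meas_ge_le_variance_div_sq hYsum ht)
  calc _ ≤ P.real ((⋃ i ∈ s, {ω | c < |X i ω|}) ∪
          {ω | t ≤ |(∑ i ∈ s, Y i) ω - P[∑ i ∈ s, Y i]|}) := measureReal_mono hsub
    _ ≤ _ := (measureReal_union_le _ _).trans
        (add_le_add (measureReal_biUnion_finset_le _ _) hcheb)

end SingleMeasure

lemma tendsto_integral_of_uniformIntegrable {α E : Type*} [MeasurableSpace α] {μ : Measure α}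
    [IsFiniteMeasure μ] [NormedAddCommGroup E] [NormedSpace ℝ E] {f : ℕ → α → E} {g : α → E}
    (hf : UniformIntegrable f 1 μ) (hg : MemLp g 1 μ)
    (hfg : ∀ᵐ x ∂μ, Tendsto (fun n => f n x) atTop (𝓝 (g x))) :
    Tendsto (fun n => ∫ x, f n x ∂μ) atTop (𝓝 (∫ x, g x ∂μ)) :=
  tendsto_integral_of_L1' g hg.1 (Eventually.of_forall fun n => (hf.memLp n).integrable le_rfl)
    (tendsto_Lp_finite_of_tendsto_ae le_rfl ENNReal.one_ne_top hf.1 hg hf.2.1 hfg)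

section Uncorrelated

variable {Ω : Type*} [MeasurableSpace Ω] {Ps : Set (Measure Ω)} {P : Measure Ω}

lemma covariance_le_upperExp (hprob : ∀ P ∈ Ps, IsProbabilityMeasure P) {U V : Ω → ℝ}
    (hU : Measurable U) (hV : Measurable V) {C : ℝ} (hUC : ∀ ω, |U ω| ≤ C) (hVC : ∀ ω, |V ω| ≤ C)
    (hP : P ∈ Ps) :
    cov[U, V; P] ≤ upperExp Ps (fun ω => (U ω - upperExp Ps U) * (V ω - upperExp Ps V)) := by
  have := hprob P hP
  have hprod : ∀ ω, |(U ω - upperExp Ps U) * (V ω - upperExp Ps V)|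
      ≤ (C + |upperExp Ps U|) * (C + |upperExp Ps V|) := fun ω => by
    rw [abs_mul]
    exact mul_le_mul (by linarith [abs_sub (U ω) (upperExp Ps U), hUC ω])
      (by linarith [abs_sub (V ω) (upperExp Ps V), hVC ω]) (abs_nonneg _)
      (by linarith [abs_nonneg (U ω), hUC ω, abs_nonneg (upperExp Ps U)])
  exact (covariance_le_integral_mul_sub (.of_bound hU.aestronglyMeasurable C (ae_of_all _ hUC))
    (.of_bound hV.aestronglyMeasurable C (ae_of_all _ hVC)) (integral_le_upperExp hprob hUC hP)
    (integral_le_upperExp hprob hVC hP)).trans (integral_le_upperExp hprob hprod hP)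

lemma integral_truncMul_sq_le_upperCap (hprob : ∀ P ∈ Ps, IsProbabilityMeasure P) {X : Ω → ℝ}
    (hX : Measurable X) {φ : ℝ → ℝ} {c : ℝ} (hone : ∀ x, |x| ≤ c → φ x = 1)
    (hzero : ∀ x, c + 1 ≤ |x| → φ x = 0) (hrange : ∀ x, φ x ∈ Icc 0 1) (hc : 0 ≤ c)
    (hP : P ∈ Ps) :
    ∫ ω, truncMul φ (X ω) ^ 2 ∂P ≤ 2 * (∫ r in 0..c, r * upperCap Ps {ω | r < |X ω|})
      + (c + 1) ^ 2 * upperCap Ps {ω | c < |X ω|} := by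
  have := hprob P hP
  refine (integral_truncMul_sq_le hX hone hzero hrange hc).trans ?_
  gcongr
  · exact intervalIntegral.integral_mono_on hc
      ((antitone_measureReal_lt _).intervalIntegrable.continuousOn_mul continuousOn_id)
      ((antitone_upperCap_lt hprob _).intervalIntegrable.continuousOn_mul continuousOn_id)
      fun r hr => mul_le_mul_of_nonneg_left (measureReal_le_upperCap hprob hP _) hr.1
  · exact measureReal_le_upperCap hprob hP _

lemma upperCap_sum_ge_le_of_uncorrelated (hprob : ∀ P ∈ Ps, IsProbabilityMeasure P)
    {ι : Type*} {s : Finset ι} {X : ι → Ω → ℝ} (hX : ∀ k, Measurable (X k)) {φ : ℝ → ℝ}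
    (hφ : Measurable φ) {c : ℝ} (hone : ∀ x, |x| ≤ c → φ x = 1)
    (hzero : ∀ x, c + 1 ≤ |x| → φ x = 0) (hrange : ∀ x, φ x ∈ Icc 0 1) (hc : 0 ≤ c)
    (huncorr : ∀ i ∈ s, ∀ k ∈ s, i ≠ k →
      upperExp Ps (fun ω => (truncMul φ (X k ω) - upperExp Ps (truncMul φ ∘ X k)) *
        (truncMul φ (X i ω) - upperExp Ps (truncMul φ ∘ X i))) = 0)
    {t : ℝ} (ht : 0 < t) :
    upperCap Ps {ω | ∑ k ∈ s, upperExp Ps (truncMul φ ∘ X k) + t ≤ ∑ k ∈ s, X k ω}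
      ≤ ∑ k ∈ s, upperCap Ps {ω | c < |X k ω|}
        + (2 * (∑ k ∈ s, ∫ r in 0..c, r * upperCap Ps {ω | r < |X k ω|})
          + (c + 1) ^ 2 * ∑ k ∈ s, upperCap Ps {ω | c < |X k ω|}) / t ^ 2 := by
  set Y : ι → Ω → ℝ := fun k => truncMul φ ∘ X k
  have hYmeas : ∀ k, Measurable (Y k) := fun k => (measurable_truncMul hφ).comp (hX k)
  have hYbdd : ∀ k ω, |Y k ω| ≤ c + 1 := fun k ω => abs_truncMul_le hzero hrange (by linarith)
  have hV : 0 ≤ ∑ k ∈ s, upperCap Ps {ω | c < |X k ω|} :=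
    Finset.sum_nonneg fun k _ => upperCap_nonneg _
  have hI : 0 ≤ ∑ k ∈ s, ∫ r in 0..c, r * upperCap Ps {ω | r < |X k ω|} :=
    Finset.sum_nonneg fun k _ => intervalIntegral.integral_nonneg hc fun r hr =>
      mul_nonneg hr.1 (upperCap_nonneg _)
  refine upperCap_le (fun P hP => ?_) (by positivity)
  have := hprob P hP
  have hYL2 : ∀ k, MemLp (Y k) 2 P := fun k =>
    .of_bound (hYmeas k).aestronglyMeasurable (c + 1) (ae_of_all _ (hYbdd k))
  have hcov : ∀ i ∈ s, ∀ j ∈ s, i ≠ j → cov[Y i, Y j; P] ≤ 0 := fun i hi j hj hij =>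
    (covariance_le_upperExp hprob (hYmeas i) (hYmeas j) (hYbdd i) (hYbdd j) hP).trans
      (huncorr j hj i hi hij.symm).le
  calc _ ≤ ∑ k ∈ s, P.real {ω | c < |X k ω|} + Var[∑ k ∈ s, Y k; P] / t ^ 2 :=
        measureReal_sum_ge_le_tail_add_variance (fun k _ => hYL2 k)
          (fun k _ => integral_le_upperExp hprob (hYbdd k) hP)
          (fun k _ ω hω => truncMul_of_abs_le hone hω) ht
    _ ≤ ∑ k ∈ s, upperCap Ps {ω | c < |X k ω|} + (∑ k ∈ s, P[Y k ^ 2]) / t ^ 2 := by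
        gcongr with k
        · exact measureReal_le_upperCap hprob hP _
        · exact variance_sum_le_sum_integral_sq (fun k _ => hYL2 k) hcov
    _ ≤ _ := by
        gcongr
        refine (Finset.sum_le_sum fun k _ =>
          integral_truncMul_sq_le_upperCap hprob (hX k) hone hzero hrange hc hP).trans_eq ?_
        rw [Finset.sum_add_distrib, Finset.mul_sum, Finset.mul_sum]

lemma upperCap_avg_ge_le_of_uncorrelated (hprob : ∀ P ∈ Ps, IsProbabilityMeasure P)
    {X : ℕ → Ω → ℝ} (hX : ∀ k, Measurable (X k)) {φ : ℝ → ℝ} (hφ : Measurable φ) {n : ℕ}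
    (hn : 1 ≤ n) (hone : ∀ x : ℝ, |x| ≤ n → φ x = 1) (hzero : ∀ x : ℝ, n + 1 ≤ |x| → φ x = 0)
    (hrange : ∀ x, φ x ∈ Icc 0 1)
    (huncorr : ∀ i ∈ Finset.Icc 1 n, ∀ k ∈ Finset.Icc 1 n, i ≠ k →
      upperExp Ps (fun ω => (truncMul φ (X k ω) - upperExp Ps (truncMul φ ∘ X k)) *
        (truncMul φ (X i ω) - upperExp Ps (truncMul φ ∘ X i))) = 0)
    {ψ : ℝ → ℝ} (hψ : ∀ y, ψ y = ∑ k ∈ Finset.Icc 1 n, y * upperCap Ps {ω | n * y < |X k ω|})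
    {ε : ℝ} (hε : 0 < ε) :
    upperCap Ps {ω | 1 / n * ∑ k ∈ Finset.Icc 1 n, upperExp Ps (truncMul φ ∘ X k) + ε
        ≤ (∑ k ∈ Finset.Icc 1 n, X k ω) / n}
      ≤ ψ 1 + (2 * (∫ y in 0..1, ψ y) + (1 + 1 / n) ^ 2 * ψ 1) / ε ^ 2 := by
  have hn : (0 : ℝ) < n := by exact_mod_cast hn
  have hevent : {ω | 1 / n * ∑ k ∈ Finset.Icc 1 n, upperExp Ps (truncMul φ ∘ X k) + ε
      ≤ (∑ k ∈ Finset.Icc 1 n, X k ω) / n} = {ω | ∑ k ∈ Finset.Icc 1 n,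
        upperExp Ps (truncMul φ ∘ X k) + n * ε ≤ ∑ k ∈ Finset.Icc 1 n, X k ω} := by
    ext ω
    rw [mem_ofPred_eq, mem_ofPred_eq, le_div_iff₀ hn]
    congr! 1
    field_simp
  have htail : ∑ k ∈ Finset.Icc 1 n, upperCap Ps {ω | (n : ℝ) < |X k ω|} = ψ 1 := by
    simp [hψ]
  rw [hevent]
  refine (upperCap_sum_ge_le_of_uncorrelated hprob hX hφ hone hzero hrange n.cast_nonneg huncorr
    (by positivity)).trans_eq ?_
  rw [htail, sum_integral_mul_upperCap_eq hprob hn.ne' hψ]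
  field_simp

end Uncorrelated

theorem nonlinear_wlln_uncorrelated_general
    {Ω : Type*} [MeasurableSpace Ω] (Ps : Set (Measure Ω))
    (hprob : ∀ P ∈ Ps, IsProbabilityMeasure P)
    (X : ℕ → Ω → ℝ) (hX : ∀ k, Measurable (X k))
    (χ : ℕ → ℝ → ℝ)
    (hχLip : ∀ n, ∃ K : NNReal, LipschitzWith K (χ n))
    (hχone : ∀ n : ℕ, ∀ x : ℝ, |x| ≤ (n : ℝ) → χ n x = 1)
    (hχzero : ∀ n : ℕ, ∀ x : ℝ, (n : ℝ) + 1 ≤ |x| → χ n x = 0)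
    (hχrange : ∀ n : ℕ, ∀ x : ℝ, χ n x ∈ Set.Icc (0 : ℝ) 1)
    (Y : ℕ → ℕ → Ω → ℝ) (hY : ∀ n k, Y n k = fun ω => X k ω * χ n |X k ω|)
    (S : ℕ → Ω → ℝ) (hS : ∀ n, S n = fun ω => ∑ k ∈ Finset.Icc 1 n, X k ω)
    (ψ : ℕ → ℝ → ℝ)
    (hψ : ∀ n : ℕ, ∀ y : ℝ, ψ n y = ∑ k ∈ Finset.Icc 1 n, y * upperCap Ps {ω | (n : ℝ) * y < |X k ω|})
    (hψ0 : ∀ y ∈ Set.Icc (0 : ℝ) 1, Tendsto (fun n => ψ n y) atTop (nhds 0))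
    (hUI : UniformIntegrable (fun n : ℕ => ψ n) 1 (volume.restrict (Set.Icc (0 : ℝ) 1)))
    (μp : ℕ → ℕ → ℝ) (hμp : ∀ n k, μp n k = upperExp Ps (Y n k))
    (μbar : ℕ → ℝ) (hμbar : ∀ n : ℕ, μbar n = (1 / (n : ℝ)) * ∑ k ∈ Finset.Icc 1 n, μp n k)
    (huncorr : ∀ n : ℕ, ∀ i ∈ Finset.Icc 1 n, ∀ k ∈ Finset.Icc 1 n, i ≠ k →
      upperExp Ps (fun ω => (Y n k ω - μp n k) * (Y n i ω - μp n i)) = 0)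
    :
    ∀ ε : ℝ, 0 < ε →
      Tendsto (fun n => upperCap Ps {ω | μbar n + ε ≤ S n ω / n}) atTop (nhds 0) := by
  intro ε hε
  obtain rfl : Y = fun n k => truncMul (χ n) ∘ X k := funext₂ hY
  obtain rfl : μp = fun n k => upperExp Ps (truncMul (χ n) ∘ X k) := funext₂ hμp
  have hψ1 : Tendsto (fun n => ψ n 1) atTop (𝓝 0) := hψ0 1 ⟨zero_le_one, le_rfl⟩
  have hI : Tendsto (fun n => ∫ y in 0..1, ψ n y) atTop (𝓝 0) := by
    simp only [intervalIntegral.integral_of_le zero_le_one, ← integral_Icc_eq_integral_Ioc]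
    simpa using tendsto_integral_of_uniformIntegrable hUI MemLp.zero
      ((ae_restrict_iff' measurableSet_Icc).2 (ae_of_all _ hψ0))
  have hlin : Tendsto (fun n : ℕ => (1 + 1 / (n : ℝ)) ^ 2) atTop (𝓝 1) := by
    simpa using (tendsto_one_div_atTop_nhds_zero_nat.const_add (1 : ℝ)).pow 2
  have hbound : Tendsto (fun n : ℕ =>
      ψ n 1 + (2 * (∫ y in 0..1, ψ n y) + (1 + 1 / (n : ℝ)) ^ 2 * ψ n 1) / ε ^ 2) atTop (𝓝 0) := by
    simpa using hψ1.add (((hI.const_mul 2).add (hlin.mul hψ1)).div_const (ε ^ 2))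
  refine squeeze_zero' (Eventually.of_forall fun n => upperCap_nonneg _)
    (eventually_atTop.2 ⟨1, fun n hn => ?_⟩) hbound
  obtain ⟨K, hK⟩ := hχLip n
  simpa only [hS, hμbar] using upperCap_avg_ge_le_of_uncorrelated hprob hX hK.continuous.measurable
    hn (hχone n) (hχzero n) (hχrange n) (huncorr n) (hψ n) hε

/-- nonlinear WLLN under pairwise uncorrelatedness (Remark 3, first
bullet): if for each n the truncated variables are pairwise uncorrelated in the
sublinear sense, then for every ε > 0, V(Sₙ/n ≥ μ̄ₙ + ε) → 0. -/
theorem nonlinear_wlln_uncorrelated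
    {Ω : Type*} [MeasurableSpace Ω] (Ps : Set (Measure Ω)) (hne : Ps.Nonempty)
    (hprob : ∀ P ∈ Ps, IsProbabilityMeasure P)
    (X : ℕ → Ω → ℝ) (hX : ∀ k, Measurable (X k))
    (χ : ℕ → ℝ → ℝ)
    (hχLip : ∀ n, ∃ K : NNReal, LipschitzWith K (χ n))
    (hχone : ∀ n : ℕ, ∀ x : ℝ, |x| ≤ (n : ℝ) → χ n x = 1)
    (hχzero : ∀ n : ℕ, ∀ x : ℝ, (n : ℝ) + 1 ≤ |x| → χ n x = 0)
    (hχrange : ∀ n : ℕ, ∀ x : ℝ, χ n x ∈ Set.Icc (0 : ℝ) 1)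
    (Y : ℕ → ℕ → Ω → ℝ) (hY : ∀ n k, Y n k = fun ω => X k ω * χ n |X k ω|)
    (S : ℕ → Ω → ℝ) (hS : ∀ n, S n = fun ω => ∑ k ∈ Finset.Icc 1 n, X k ω)
    (ψ : ℕ → ℝ → ℝ)
    (hψ : ∀ n : ℕ, ∀ y : ℝ, ψ n y = ∑ k ∈ Finset.Icc 1 n, y * upperCap Ps {ω | (n : ℝ) * y < |X k ω|})
    (hψ0 : ∀ y ∈ Set.Icc (0 : ℝ) 1, Tendsto (fun n => ψ n y) atTop (nhds 0))
    (hUI : UniformIntegrable (fun n : ℕ => ψ n) 1 (volume.restrict (Set.Icc (0 : ℝ) 1)))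
    (μp : ℕ → ℕ → ℝ) (hμp : ∀ n k, μp n k = upperExp Ps (Y n k))
    (μbar : ℕ → ℝ) (hμbar : ∀ n : ℕ, μbar n = (1 / (n : ℝ)) * ∑ k ∈ Finset.Icc 1 n, μp n k)
    (huncorr : ∀ n : ℕ, ∀ i ∈ Finset.Icc 1 n, ∀ k ∈ Finset.Icc 1 n, i ≠ k →
      upperExp Ps (fun ω => (Y n k ω - μp n k) * (Y n i ω - μp n i)) = 0)
    :
    ∀ ε : ℝ, 0 < ε →
      Tendsto (fun n => upperCap Ps {ω | μbar n + ε ≤ S n ω / n}) atTop (nhds 0) :=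
  nonlinear_wlln_uncorrelated_general Ps hprob X hX χ hχLip hχone hχzero hχrange Y hY S hS ψ hψ hψ0
    hUI μp hμp μbar hμbar huncorr
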